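/- arXiv:2601.11862 — 2 statements merged into one kernel-verified Lean document; each statement's English description precedes it below -/
import Mathlib

section
/- Fix σ_X² > 0 and D ∈ (0, σ_X²). Define SNR(γ) = (σ_X² + γ - D)² / (4σ_X²γ - (σ_X² + γ - D)²) for γ in the interval I_D = [(σ_X - √D)², (σ_X + √D)²] where the denominator is nonnegative. Then SNR is strictly decreasing on [(σ_X - √D)², σ_X² - D] and strictly increasing on [σ_X² - D, (σ_X + √D)²], and attains its minimum (σ_X² - D)/D at γ = σ_X² - D. -/
open Real Set

/-! Dividing numerator and denominator by `γ` writes `SNR γ = h γ / (4 σX² - h γ)` with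
`h γ = (γ + s) ^ 2 / γ = γ + 2 s + s ^ 2 / γ` and `s = σX² - D`. The outer map
`t ↦ t / (c - t)` is increasing below `c > 0`, and `h` decreases on `(0, s]` and increases
on `[s, ∞)`. Inside `I_D` we have `h γ < 4 σX²`, because `4 σX² γ - (γ + s) ^ 2` factors as
`(γ - (σX - √D)²) ((σX + √D)² - γ)`. -/

lemma strictMonoOn_div_sub_self {c : ℝ} (hc : 0 < c) :
    StrictMonoOn (fun t : ℝ => t / (c - t)) (Iio c) := by
  intro x hx y hy hxy
  rw [div_lt_div_iff₀ (sub_pos.2 hx) (sub_pos.2 hy)]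
  nlinarith

-- Both monotonicity statements rest on
-- `y * (x + s) ^ 2 - x * (y + s) ^ 2 = (y - x) * (s ^ 2 - x * y)`.
lemma strictAntiOn_add_sq_div {s : ℝ} :
    StrictAntiOn (fun x : ℝ => (x + s) ^ 2 / x) (Ioc 0 s) := by
  intro x hx y hy hxy
  have hxy_lt : x * y < s ^ 2 := by nlinarith [hx.1, hy.2]
  rw [div_lt_div_iff₀ hy.1 hx.1]
  nlinarith [mul_pos (sub_pos.2 hxy) (sub_pos.2 hxy_lt)]

lemma strictMonoOn_add_sq_div {s : ℝ} (hs : 0 < s) :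
    StrictMonoOn (fun x : ℝ => (x + s) ^ 2 / x) (Ici s) := by
  intro x hx y hy hxy
  have hx0 : 0 < x := hs.trans_le hx
  have hxy_gt : s ^ 2 < x * y := by
    nlinarith [mul_le_mul hx hx hs.le hx0.le, mul_lt_mul_of_pos_left hxy hx0]
  rw [div_lt_div_iff₀ hx0 (hx0.trans hxy)]
  nlinarith [mul_pos (sub_pos.2 hxy) (sub_pos.2 hxy_gt)]

lemma div_sub_eq_div_div_sub {γ : ℝ} (hγ : γ ≠ 0) (a b : ℝ) :
    b / (a * γ - b) = b / γ / (a - b / γ) := by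
  rw [sub_div' hγ, div_div_div_cancel_right₀ hγ]

lemma add_sq_lt_four_sq_mul {σ r γ : ℝ} (hγ : γ ∈ Ioo ((σ - r) ^ 2) ((σ + r) ^ 2)) :
    (γ + (σ ^ 2 - r ^ 2)) ^ 2 < 4 * σ ^ 2 * γ := by
  have hfactor : 4 * σ ^ 2 * γ - (γ + (σ ^ 2 - r ^ 2)) ^ 2 =
      (γ - (σ - r) ^ 2) * ((σ + r) ^ 2 - γ) := by ring
  linarith [mul_pos (sub_pos.2 hγ.1) (sub_pos.2 hγ.2)]

/-- With `σX > 0`, `D ∈ (0, σX²)` and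
`SNR(γ) = (σX² + γ - D)² / (4σX²γ - (σX² + γ - D)²)` for `γ` in the interior of
`I_D = [(σX - √D)², (σX + √D)²]`, SNR is strictly decreasing up to `σX² - D`,
strictly increasing afterwards, and attains its minimum `(σX² - D)/D` at `γ = σX² - D`. -/
theorem snr_unimodal (σX D : ℝ) (hσ : 0 < σX) (hD0 : 0 < D) (hDσ : D < σX ^ 2) :
    let SNR : ℝ → ℝ := fun γ =>
      (σX ^ 2 + γ - D) ^ 2 / (4 * σX ^ 2 * γ - (σX ^ 2 + γ - D) ^ 2)
    StrictAntiOn SNR (Ioc ((σX - Real.sqrt D) ^ 2) (σX ^ 2 - D)) ∧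
    StrictMonoOn SNR (Ico (σX ^ 2 - D) ((σX + Real.sqrt D) ^ 2)) ∧
    (∀ γ ∈ Ioo ((σX - Real.sqrt D) ^ 2) ((σX + Real.sqrt D) ^ 2),
      SNR (σX ^ 2 - D) ≤ SNR γ) ∧
    SNR (σX ^ 2 - D) = (σX ^ 2 - D) / D := by
  intro SNR
  obtain ⟨r, hr, rfl⟩ : ∃ r, 0 < r ∧ D = r ^ 2 := ⟨√D, sqrt_pos.2 hD0, (sq_sqrt hD0.le).symm⟩
  rw [sqrt_sq hr.le]
  have hs : 0 < σX ^ 2 - r ^ 2 := sub_pos.2 hDσ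
  have hrσ : r < σX := (pow_lt_pow_iff_left₀ hr.le hσ.le two_ne_zero).1 hDσ
  have hlo : (σX - r) ^ 2 < σX ^ 2 - r ^ 2 := by nlinarith
  have hhi : σX ^ 2 - r ^ 2 < (σX + r) ^ 2 := by nlinarith
  set I := Ioo ((σX - r) ^ 2) ((σX + r) ^ 2)
  have hcomp : EqOn ((fun t => t / (4 * σX ^ 2 - t)) ∘ fun γ => (γ + (σX ^ 2 - r ^ 2)) ^ 2 / γ)
      SNR I := by
    intro γ hγ
    simp only [SNR, Function.comp, div_sub_eq_div_div_sub (sq_nonneg _ |>.trans_lt hγ.1).ne']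
    ring
  have hmaps : MapsTo (fun γ => (γ + (σX ^ 2 - r ^ 2)) ^ 2 / γ) I (Iio (4 * σX ^ 2)) := by
    intro γ hγ
    rw [mem_Iio, div_lt_iff₀ (sq_nonneg _ |>.trans_lt hγ.1)]
    exact add_sq_lt_four_sq_mul hγ
  have hanti : StrictAntiOn SNR (Ioc ((σX - r) ^ 2) (σX ^ 2 - r ^ 2)) :=
    ((strictMonoOn_div_sub_self (by positivity)).comp_strictAntiOn
      (strictAntiOn_add_sq_div.mono (Ioc_subset_Ioc_left (sq_nonneg _)))
      (hmaps.mono_left (Ioc_subset_Ioo_right hhi))).congr (hcomp.mono (Ioc_subset_Ioo_right hhi))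
  have hmono : StrictMonoOn SNR (Ico (σX ^ 2 - r ^ 2) ((σX + r) ^ 2)) :=
    ((strictMonoOn_div_sub_self (by positivity)).comp
      ((strictMonoOn_add_sq_div hs).mono Ico_subset_Ici_self)
      (hmaps.mono_left (Ico_subset_Ioo_left hlo))).congr (hcomp.mono (Ico_subset_Ioo_left hlo))
  refine ⟨hanti, hmono, fun γ hγ => ?_, ?_⟩
  · rcases le_total γ (σX ^ 2 - r ^ 2) with h | h
    · exact hanti.antitoneOn ⟨hγ.1, h⟩ ⟨hlo, le_rfl⟩ h
    · exact hmono.monotoneOn ⟨le_rfl, hhi⟩ ⟨h, hγ.2⟩ h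
  · simp only [SNR]
    rw [div_eq_div_iff (by nlinarith) hD0.ne']
    ring
end

section
/- Given a prefix-free binary code with codeword lengths ℓ(k) for a discrete random variable K, and t > 0, Campbell's cost L(t) = (1/t) log₂ E[2^{t ℓ(K)}] satisfies L(t) ≥ H_α(K) where α = 1/(t+1), for any lengths satisfying the Kraft inequality ∑_k 2^{-ℓ(k)} ≤ 1. -/
/-!
Write `p k ^ α` as the product `(p k 2^{t ℓ k})^α (2^{-ℓ k})^{1-α}`: the exponents of `2` cancel
because `t α = 1 - α`. Hölder's inequality with exponents `1/α` and `1/(1-α)`, together with Kraft's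
inequality, then gives `∑ p k ^ α ≤ (∑ p k 2^{t ℓ k})^α`, and taking `log₂` and multiplying by
`1/(1-α)` turns this into the claim, since `α/(1-α) = 1/t`.
-/

open Real

theorem summable_and_tsum_rpow_mul_rpow_one_sub_le {ι : Type*} {a b : ι → ℝ}
    (ha : ∀ i, 0 ≤ a i) (hb : ∀ i, 0 ≤ b i) (ha_sum : Summable a) (hb_sum : Summable b)
    {α : ℝ} (hα0 : 0 < α) (hα1 : α < 1) :
    (Summable fun i => a i ^ α * b i ^ (1 - α)) ∧
      ∑' i, a i ^ α * b i ^ (1 - α) ≤ (∑' i, a i) ^ α * (∑' i, b i) ^ (1 - α) := by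
  have h1α : 0 < 1 - α := sub_pos.mpr hα1
  have hconj := holderConjugate_one_div hα0 h1α (add_sub_cancel α 1)
  have hinv {x : ℝ} (hx : 0 ≤ x) {β : ℝ} (hβ : 0 < β) : (x ^ β) ^ (1 / β) = x := by
    rw [← rpow_mul hx, mul_one_div_cancel hβ.ne', rpow_one]
  have := summable_and_inner_le_Lp_mul_Lq_tsum_of_nonneg hconj
    (fun i => rpow_nonneg (ha i) α) (fun i => rpow_nonneg (hb i) (1 - α))
    (by simpa only [hinv (ha _) hα0] using ha_sum) (by simpa only [hinv (hb _) h1α] using hb_sum)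
  simpa only [hinv (ha _) hα0, hinv (hb _) h1α, one_div_one_div] using this

theorem mul_two_rpow_rpow_mul_two_rpow_neg_rpow {t α : ℝ} (htα : t * α = 1 - α) (x y : ℝ) (hx : 0 ≤ x) :
    (x * (2 : ℝ) ^ (t * y)) ^ α * ((2 : ℝ) ^ (-y)) ^ (1 - α) = x ^ α := by
  have h2 : (0 : ℝ) < 2 := two_pos
  have hexp : t * y * α + -y * (1 - α) = 0 := by linear_combination y * htα
  rw [mul_rpow hx (rpow_nonneg h2.le _), ← rpow_mul h2.le, ← rpow_mul h2.le, mul_assoc,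
    ← rpow_add h2, hexp, rpow_zero, mul_one]

theorem summable_and_tsum_rpow_le_rpow_tsum_mul_two_rpow {ι : Type*} {p ℓ : ι → ℝ}
    (hpos : ∀ k, 0 ≤ p k) {t α : ℝ} (ht : 0 < t) (hα : α = 1 / (t + 1))
    (hkraft_sum : Summable fun k => (2 : ℝ) ^ (-ℓ k)) (hkraft : ∑' k, (2 : ℝ) ^ (-ℓ k) ≤ 1)
    (hmom : Summable fun k => p k * (2 : ℝ) ^ (t * ℓ k)) :
    (Summable fun k => p k ^ α) ∧ ∑' k, p k ^ α ≤ (∑' k, p k * (2 : ℝ) ^ (t * ℓ k)) ^ α := by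
  have hα0 : 0 < α := by rw [hα]; positivity
  have hα1 : α < 1 := by rw [hα, div_lt_one (by linarith)]; linarith
  have htα : t * α = 1 - α := by rw [hα]; field_simp; ring
  have hprod (k : ι) := mul_two_rpow_rpow_mul_two_rpow_neg_rpow htα (p k) (ℓ k) (hpos k)
  obtain ⟨hsum, hholder⟩ := summable_and_tsum_rpow_mul_rpow_one_sub_le
    (fun k => mul_nonneg (hpos k) (rpow_nonneg zero_le_two _)) (fun k => rpow_nonneg zero_le_two _)
    hmom hkraft_sum hα0 hα1
  simp only [hprod] at hsum hholder
  have hmom_nonneg : 0 ≤ ∑' k, p k * (2 : ℝ) ^ (t * ℓ k) :=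
    tsum_nonneg fun k => mul_nonneg (hpos k) (by positivity)
  have hkraft_nonneg : 0 ≤ ∑' k, (2 : ℝ) ^ (-ℓ k) := tsum_nonneg fun k => by positivity
  exact ⟨hsum, hholder.trans <| mul_le_of_le_one_right (rpow_nonneg hmom_nonneg α)
    (rpow_le_one hkraft_nonneg hkraft (sub_nonneg.mpr hα1.le))⟩

theorem campbell_cost_lower_bound_general (p : ℕ+ → ℝ) (ℓ : ℕ+ → ℕ)
    (hpos : ∀ k, 0 ≤ p k) (hp1 : ∑' k, p k = 1)
    (t α : ℝ) (ht : 0 < t) (hα : α = 1 / (t + 1))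
    (hkraft : Summable (fun k => (2:ℝ) ^ (-(ℓ k : ℝ))) ∧
      ∑' k : ℕ+, (2:ℝ) ^ (-(ℓ k : ℝ)) ≤ 1)
    (hmom : Summable fun k => p k * (2:ℝ) ^ (t * (ℓ k : ℝ))) :
    (1 / (1 - α)) * Real.logb 2 (∑' k : ℕ+, (p k) ^ α)
      ≤ (1 / t) * Real.logb 2 (∑' k : ℕ+, p k * (2:ℝ) ^ (t * (ℓ k : ℝ))) := by
  have hα0 : 0 < α := by rw [hα]; positivity
  have h1α : 0 < 1 - α := by rw [hα, sub_pos, div_lt_one (by linarith)]; linarith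
  obtain ⟨hren, hkey⟩ := summable_and_tsum_rpow_le_rpow_tsum_mul_two_rpow hpos ht hα
    hkraft.1 hkraft.2 hmom
  set M := ∑' k : ℕ+, p k * (2:ℝ) ^ (t * (ℓ k : ℝ))
  have hSpos : 0 < ∑' k, p k ^ α := by
    obtain ⟨k, hk⟩ := Function.ne_iff.mp fun h : p = 0 => by simp [h] at hp1
    exact hren.tsum_pos (fun j => rpow_nonneg (hpos j) α) k
      (rpow_pos_of_pos ((hpos k).lt_of_ne' hk) α)
  have hMpos : 0 < M := by
    have hM0 : 0 ≤ M := tsum_nonneg fun k => mul_nonneg (hpos k) (by positivity)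
    refine hM0.lt_of_ne fun hM => ?_
    rw [← hM, zero_rpow hα0.ne'] at hkey
    linarith
  have hlog : logb 2 (∑' k, p k ^ α) ≤ α * logb 2 M := by
    rw [← logb_rpow_eq_mul_logb_of_pos hMpos]
    exact logb_le_logb_of_le one_lt_two hSpos hkey
  have hratio : 1 / (1 - α) * α = 1 / t := by
    rw [hα]; field_simp; rw [add_sub_cancel_right, div_self ht.ne']
  calc 1 / (1 - α) * logb 2 (∑' k, p k ^ α) ≤ 1 / (1 - α) * (α * logb 2 M) := by gcongr
    _ = 1 / t * logb 2 M := by rw [← mul_assoc, hratio]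

/-- Campbell's cost bound: for a pmf `p` on a countable set, codeword lengths `ℓ`
satisfying Kraft's inequality `∑ 2^{-ℓ(k)} ≤ 1`, and `t > 0` with `α = 1/(t+1)`,
Campbell's cost `L(t) = (1/t) log₂ E[2^{t ℓ(K)}]` satisfies `L(t) ≥ H_α(K)`. -/
theorem campbell_cost_lower_bound (p : ℕ+ → ℝ) (ℓ : ℕ+ → ℕ)
    (hpos : ∀ k, 0 ≤ p k) (hsum : Summable p) (hp1 : ∑' k, p k = 1)
    (t α : ℝ) (ht : 0 < t) (hα : α = 1 / (t + 1))
    (hkraft : Summable (fun k => (2:ℝ) ^ (-(ℓ k : ℝ))) ∧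
      ∑' k : ℕ+, (2:ℝ) ^ (-(ℓ k : ℝ)) ≤ 1)
    (hmom : Summable fun k => p k * (2:ℝ) ^ (t * (ℓ k : ℝ)))
    (hren : Summable fun k => (p k) ^ α) :
    (1 / (1 - α)) * Real.logb 2 (∑' k : ℕ+, (p k) ^ α)
      ≤ (1 / t) * Real.logb 2 (∑' k : ℕ+, p k * (2:ℝ) ^ (t * (ℓ k : ℝ))) :=
  campbell_cost_lower_bound_general p ℓ hpos hp1 t α ht hα hkraft hmom
end
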